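/- arXiv:2205.04299 — 4 statements merged into one kernel-verified Lean document; each statement's English description precedes it below -/
import Mathlib

section
/- Let H be a real Hilbert space, T : H → H a continuous linear self-adjoint operator, δ ∈ H with δ ≠ 0 and T δ = 0, and ρ ∈ ℝ. Define K x = T x + ρ ⟨δ, x⟩ δ. If ψ ∈ H with ψ ≠ 0 and ⟨ψ, δ⟩ ≠ 0 satisfies K ψ = λ ψ for some λ ∈ ℝ, then λ = ρ ‖δ‖². In particular, δ/‖δ‖ is, up to the eigenspace of ρ‖δ‖², the only eigenfunction of K that is not orthogonal to δ. -/
/-! Pair the eigen-equation with `δ`. Since `T` is symmetric and kills `δ`, the term `⟨δ, T ψ⟩`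
vanishes, leaving `ρ ‖δ‖² ⟨δ, ψ⟩ = λ ⟨δ, ψ⟩`; alignment lets us cancel `⟨δ, ψ⟩`. -/

open scoped InnerProductSpace

theorem LinearMap.IsSymmetric.inner_apply_eq_zero_of_apply_eq_zero
    {𝕜 E : Type*} [RCLike 𝕜] [NormedAddCommGroup E] [InnerProductSpace 𝕜 E]
    {T : E →ₗ[𝕜] E} (hT : T.IsSymmetric) {δ : E} (hTδ : T δ = 0) (x : E) :
    ⟪δ, T x⟫_𝕜 = 0 := by
  rw [← hT, hTδ, inner_zero_left]

theorem inner_apply_add_rankOne_eq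
    {H : Type*} [NormedAddCommGroup H] [InnerProductSpace ℝ H]
    {T : H →ₗ[ℝ] H} (hT : T.IsSymmetric) {δ : H} (hTδ : T δ = 0) (ρ : ℝ) (ψ : H) :
    ⟪δ, T ψ + (ρ * ⟪δ, ψ⟫_ℝ) • δ⟫_ℝ = ρ * ‖δ‖ ^ 2 * ⟪δ, ψ⟫_ℝ := by
  rw [inner_add_right, hT.inner_apply_eq_zero_of_apply_eq_zero hTδ, real_inner_smul_right,
    real_inner_self_eq_norm_sq]
  ring

theorem enhanced_operator_aligned_eigenvalue_general
    {H : Type*} [NormedAddCommGroup H] [InnerProductSpace ℝ H]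
    (T : H →L[ℝ] H) (hsa : ∀ x y : H, (inner ℝ (T x) y : ℝ) = inner ℝ x (T y))
    (δ : H) (hTδ : T δ = 0) (ρ : ℝ)
    (ψ : H) (halign : (inner ℝ ψ δ : ℝ) ≠ 0) (lam : ℝ)
    (heig : T ψ + (ρ * (inner ℝ δ ψ : ℝ)) • δ = lam • ψ) :
    lam = ρ * ‖δ‖ ^ 2 := by
  have hpaired : ρ * ‖δ‖ ^ 2 * ⟪δ, ψ⟫_ℝ = lam * ⟪δ, ψ⟫_ℝ := by
    rw [← inner_apply_add_rankOne_eq (T := T.toLinearMap) hsa hTδ ρ ψ]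
    simpa only [ContinuousLinearMap.coe_coe, real_inner_smul_right] using congrArg (inner ℝ δ) heig
  exact (mul_right_cancel₀ (real_inner_comm ψ δ ▸ halign) hpaired).symm

/-- Any eigenfunction of the enhanced operator `K x = T x + ρ ⟨δ, x⟩ δ` that is not
orthogonal to the jump `δ` must have eigenvalue `ρ‖δ‖²`. -/
theorem enhanced_operator_aligned_eigenvalue
    {H : Type*} [NormedAddCommGroup H] [InnerProductSpace ℝ H] [CompleteSpace H]
    (T : H →L[ℝ] H) (hsa : ∀ x y : H, (inner ℝ (T x) y : ℝ) = inner ℝ x (T y))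
    (δ : H) (hδ : δ ≠ 0) (hTδ : T δ = 0) (ρ : ℝ)
    (ψ : H) (hψ : ψ ≠ 0) (halign : (inner ℝ ψ δ : ℝ) ≠ 0) (lam : ℝ)
    (heig : T ψ + (ρ * (inner ℝ δ ψ : ℝ)) • δ = lam • ψ) :
    lam = ρ * ‖δ‖ ^ 2 :=
  enhanced_operator_aligned_eigenvalue_general T hsa δ hTδ ρ ψ halign lam heig
end

section
/- Consider the change-point model with grid estimators δ̂_m, and let G be a nonempty finite subset of {1, …, N−1}. The averaged jump estimator δ̂ = (1/|G|) Σ_{m ∈ G} δ̂_m satisfies E δ̂ = C • δ, where C = (1/|G|) Σ_{m ∈ G} c_m with c_m = (N − k*)/(N − m) for m ≤ k* and c_m = k*/m for m > k*, and 0 < C ≤ 1. In particular, if δ ≠ 0 then E δ̂ / ‖E δ̂‖ = δ / ‖δ‖. -/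
/-!
Write `E X_n = μ₁ + [n ≤ k*] • δ`. Since `δ̂_m` is linear in the sample and is the difference of
two averages, the `μ₁` parts cancel in `E δ̂_m` and what is left is
`(min(m, k*)/m - (k* - min(m, k*))/(N - m)) • δ = c_m • δ`. Averaging over `G` gives `C • δ`, where
`C` is the mean of the numbers `c_m ∈ (0, 1]`; a positive multiple of `δ` has the direction of `δ`.
-/

open MeasureTheory Finset

section ChangePoint

variable {H : Type*} [NormedAddCommGroup H] [NormedSpace ℝ H]
  {Ω : Type*} [MeasurableSpace Ω] {P : Measure Ω} {X : ℕ → Ω → H}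

def changePointMean (k : ℕ) (μ0 μ1 : H) (n : ℕ) : H := if n ≤ k then μ0 else μ1

noncomputable def gridJumpEstimate (N m : ℕ) (x : ℕ → H) : H :=
  (m : ℝ)⁻¹ • ∑ n ∈ Icc 1 m, x n - ((N : ℝ) - m)⁻¹ • ∑ n ∈ Icc (m + 1) N, x n

noncomputable def jumpFactor (N k m : ℕ) : ℝ :=
  if m ≤ k then ((N : ℝ) - k) / ((N : ℝ) - m) else (k : ℝ) / m

theorem sum_Ioc_changePointMean (k : ℕ) (μ0 μ1 : H) {a b : ℕ} (hab : a ≤ b) :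
    ∑ n ∈ Ioc a b, changePointMean k μ0 μ1 n =
      ((b : ℝ) - a) • μ1 + (((min b k : ℕ) : ℝ) - (min a k : ℕ)) • (μ0 - μ1) := by
  have hmean : ∀ n, changePointMean k μ0 μ1 n =
      μ1 + (if n ≤ k then (1 : ℝ) else 0) • (μ0 - μ1) := fun n => by
    unfold changePointMean
    split_ifs <;> simp
  have hfilter : (Ioc a b).filter (· ≤ k) = Ioc (min a k) (min b k) := by
    ext n
    simp only [mem_filter, mem_Ioc]
    omega
  simp only [hmean, sum_add_distrib, sum_const, Nat.card_Ioc, ← sum_smul, sum_boole, hfilter]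
  rw [← Nat.cast_smul_eq_nsmul ℝ, Nat.cast_sub hab, Nat.cast_sub (min_le_min_right k hab)]

theorem gridJumpEstimate_changePointMean {N k m : ℕ} (hm : 0 < m) (hmN : m < N) (hkN : k ≤ N)
    (μ0 μ1 : H) :
    gridJumpEstimate N m (changePointMean k μ0 μ1) = jumpFactor N k m • (μ0 - μ1) := by
  have hm' : (m : ℝ) ≠ 0 := by positivity
  have hNm : (N : ℝ) - m ≠ 0 := sub_ne_zero.2 (by exact_mod_cast hmN.ne')
  rw [gridJumpEstimate, Icc_add_one_left_eq_Ioc, show Icc 1 m = Ioc 0 m from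
      Icc_add_one_left_eq_Ioc 0 m, sum_Ioc_changePointMean k μ0 μ1 hmN.le,
    sum_Ioc_changePointMean k μ0 μ1 (Nat.zero_le m), Nat.zero_min, min_eq_right hkN, jumpFactor]
  split_ifs with hmk
  · rw [min_eq_left hmk]
    match_scalars <;> field_simp <;> ring
  · rw [min_eq_right (by omega : k ≤ m)]
    match_scalars <;> field_simp <;> ring

theorem gridJumpEstimate_congr {N m : ℕ} (hmN : m ≤ N) {x y : ℕ → H}
    (hxy : ∀ n ∈ Icc 1 N, x n = y n) : gridJumpEstimate N m x = gridJumpEstimate N m y := by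
  unfold gridJumpEstimate
  congr 2
  · exact sum_congr rfl fun n hn => hxy n (Icc_subset_Icc_right hmN hn)
  · exact sum_congr rfl fun n hn => hxy n (Icc_subset_Icc_left (by omega) hn)

theorem jumpFactor_pos {N k m : ℕ} (hk : 0 < k) (hkN : k < N) (hmN : m < N) :
    0 < jumpFactor N k m := by
  have hkN' : (k : ℝ) < N := by exact_mod_cast hkN
  have hmN' : (m : ℝ) < N := by exact_mod_cast hmN
  unfold jumpFactor
  split_ifs with hmk
  · exact div_pos (by linarith) (by linarith)
  · exact div_pos (by exact_mod_cast hk) (by exact_mod_cast (by omega : 0 < m))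

theorem jumpFactor_le_one {N k m : ℕ} (hmN : m < N) : jumpFactor N k m ≤ 1 := by
  have hmN' : (m : ℝ) < N := by exact_mod_cast hmN
  unfold jumpFactor
  split_ifs with hmk
  · have hmk' : (m : ℝ) ≤ k := by exact_mod_cast hmk
    exact (div_le_one (by linarith)).2 (by linarith)
  · exact div_le_one_of_le₀ (by exact_mod_cast (by omega : k ≤ m)) (by positivity)

theorem integrable_smul_sum {s : Finset ℕ} (hX : ∀ n ∈ s, Integrable (X n) P) (c : ℝ) :
    Integrable (fun ω => c • ∑ n ∈ s, X n ω) P :=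
  (integrable_finsetSum s hX).smul c

theorem integrable_gridJumpEstimate {N m : ℕ} (hmN : m ≤ N)
    (hX : ∀ n ∈ Icc 1 N, Integrable (X n) P) :
    Integrable (fun ω => gridJumpEstimate N m (X · ω)) P :=
  (integrable_smul_sum (fun n hn => hX n (Icc_subset_Icc_right hmN hn)) _).sub
    (integrable_smul_sum (fun n hn => hX n (Icc_subset_Icc_left (by omega) hn)) _)

theorem integral_gridJumpEstimate {N m : ℕ} (hmN : m ≤ N)
    (hX : ∀ n ∈ Icc 1 N, Integrable (X n) P) :
    ∫ ω, gridJumpEstimate N m (X · ω) ∂P = gridJumpEstimate N m (fun n => ∫ ω, X n ω ∂P) := by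
  have hlo : ∀ n ∈ Icc 1 m, Integrable (X n) P := fun n hn => hX n (Icc_subset_Icc_right hmN hn)
  have hhi : ∀ n ∈ Icc (m + 1) N, Integrable (X n) P :=
    fun n hn => hX n (Icc_subset_Icc_left (by omega) hn)
  simp only [gridJumpEstimate]
  rw [integral_sub (integrable_smul_sum hlo _) (integrable_smul_sum hhi _), integral_smul,
    integral_smul, integral_finsetSum _ hlo, integral_finsetSum _ hhi]

end ChangePoint

theorem averaged_jump_estimator_direction_general
    {Ω : Type*} [MeasurableSpace Ω] (P : Measure Ω)
    {H : Type*} [NormedAddCommGroup H] [NormedSpace ℝ H]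
    (N kstar : ℕ) (hk1 : 1 ≤ kstar) (hk2 : kstar ≤ N - 1)
    (X : ℕ → Ω → H) (hXint : ∀ n, n ∈ Finset.Icc 1 N → Integrable (X n) P)
    (μ0 μ1 δ : H) (hδ : δ = μ0 - μ1)
    (hmean0 : ∀ n, 1 ≤ n → n ≤ kstar → ∫ ω, X n ω ∂P = μ0)
    (hmean1 : ∀ n, kstar < n → n ≤ N → ∫ ω, X n ω ∂P = μ1)
    (c : ℕ → ℝ)
    (hc : ∀ m, c m = if m ≤ kstar then ((N : ℝ) - kstar) / ((N : ℝ) - m)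
      else (kstar : ℝ) / m)
    (G : Finset ℕ) (hGne : G.Nonempty) (hGsub : G ⊆ Finset.Icc 1 (N - 1)) :
    ∀ Ed : H,
      Ed = (∫ ω, (G.card : ℝ)⁻¹ • ∑ m ∈ G,
          ((m : ℝ)⁻¹ • ∑ n ∈ Finset.Icc 1 m, X n ω
            - ((N : ℝ) - m)⁻¹ • ∑ n ∈ Finset.Icc (m + 1) N, X n ω) ∂P) →
        Ed = ((G.card : ℝ)⁻¹ * ∑ m ∈ G, c m) • δ
          ∧ 0 < (G.card : ℝ)⁻¹ * ∑ m ∈ G, c m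
          ∧ (G.card : ℝ)⁻¹ * ∑ m ∈ G, c m ≤ 1
          ∧ (δ ≠ 0 → ‖Ed‖⁻¹ • Ed = ‖δ‖⁻¹ • δ) := by
  intro Ed hEd
  obtain rfl : c = jumpFactor N kstar := funext hc
  have hG : ∀ m ∈ G, 0 < m ∧ m < N := fun m hm => by have := mem_Icc.1 (hGsub hm); omega
  have hmean : ∀ n ∈ Icc 1 N, ∫ ω, X n ω ∂P = changePointMean kstar μ0 μ1 n := fun n hn => by
    obtain ⟨h1, hN⟩ := mem_Icc.1 hn
    unfold changePointMean
    split_ifs with hk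
    exacts [hmean0 n h1 hk, hmean1 n (not_le.1 hk) hN]
  have hgrid : ∀ m ∈ G, ∫ ω, gridJumpEstimate N m (X · ω) ∂P = jumpFactor N kstar m • δ :=
    fun m hm => by
      obtain ⟨hm0, hmN⟩ := hG m hm
      rw [integral_gridJumpEstimate hmN.le hXint, gridJumpEstimate_congr hmN.le hmean,
        gridJumpEstimate_changePointMean hm0 hmN (by omega), hδ]
  have hEdδ : Ed = ((G.card : ℝ)⁻¹ * ∑ m ∈ G, jumpFactor N kstar m) • δ := hEd.trans <| by
    change ∫ ω, (G.card : ℝ)⁻¹ • ∑ m ∈ G, gridJumpEstimate N m (X · ω) ∂P = _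
    rw [integral_smul, integral_finsetSum _ fun m hm =>
        integrable_gridJumpEstimate (hG m hm).2.le hXint,
      sum_congr rfl hgrid, ← sum_smul, smul_smul]
  have hC : (G.card : ℝ)⁻¹ * ∑ m ∈ G, jumpFactor N kstar m = G.expect (jumpFactor N kstar) := by
    rw [expect_eq_sum_div_card, div_eq_inv_mul]
  rw [hC] at hEdδ ⊢
  have hCpos : 0 < G.expect (jumpFactor N kstar) :=
    expect_pos (fun m hm => jumpFactor_pos (by omega) (by omega) (hG m hm).2) hGne
  refine ⟨hEdδ, hCpos, expect_le hGne fun m hm => jumpFactor_le_one (hG m hm).2, fun _ => ?_⟩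
  rw [hEdδ]
  exact NormedSpace.normalize_smul_of_pos hCpos δ

/-- The averaged jump estimator `δ̂ = (1/|G|) Σ_{m∈G} δ̂_m` over a finite grid `G` has
expectation `C • δ` with `C = (1/|G|) Σ_{m∈G} c_m ∈ (0, 1]`; in particular, if `δ ≠ 0`,
the direction of `E δ̂` is exactly `δ/‖δ‖`. -/
theorem averaged_jump_estimator_direction
    {Ω : Type*} [MeasurableSpace Ω] (P : Measure Ω) [IsProbabilityMeasure P]
    {H : Type*} [NormedAddCommGroup H] [NormedSpace ℝ H] [CompleteSpace H]
    (N kstar : ℕ) (hk1 : 1 ≤ kstar) (hk2 : kstar ≤ N - 1)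
    (X : ℕ → Ω → H) (hXint : ∀ n, n ∈ Finset.Icc 1 N → Integrable (X n) P)
    (μ0 μ1 δ : H) (hδ : δ = μ0 - μ1)
    (hmean0 : ∀ n, 1 ≤ n → n ≤ kstar → ∫ ω, X n ω ∂P = μ0)
    (hmean1 : ∀ n, kstar < n → n ≤ N → ∫ ω, X n ω ∂P = μ1)
    (c : ℕ → ℝ)
    (hc : ∀ m, c m = if m ≤ kstar then ((N : ℝ) - kstar) / ((N : ℝ) - m)
      else (kstar : ℝ) / m)
    (G : Finset ℕ) (hGne : G.Nonempty) (hGsub : G ⊆ Finset.Icc 1 (N - 1)) :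
    ∀ Ed : H,
      Ed = (∫ ω, (G.card : ℝ)⁻¹ • ∑ m ∈ G,
          ((m : ℝ)⁻¹ • ∑ n ∈ Finset.Icc 1 m, X n ω
            - ((N : ℝ) - m)⁻¹ • ∑ n ∈ Finset.Icc (m + 1) N, X n ω) ∂P) →
        Ed = ((G.card : ℝ)⁻¹ * ∑ m ∈ G, c m) • δ
          ∧ 0 < (G.card : ℝ)⁻¹ * ∑ m ∈ G, c m
          ∧ (G.card : ℝ)⁻¹ * ∑ m ∈ G, c m ≤ 1
          ∧ (δ ≠ 0 → ‖Ed‖⁻¹ • Ed = ‖δ‖⁻¹ • δ) :=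
  averaged_jump_estimator_direction_general P N kstar hk1 hk2 X hXint μ0 μ1 δ hδ hmean0 hmean1 c hc
    G hGne hGsub
end

section
/- Let H be a real inner product space, X, δ ∈ H with δ ≠ 0, and κ ≥ 0. Define the shrunk projection Y^{(κ)} = X − (⟨X, δ⟩/(‖δ‖ + κ)²) • δ and the exact projection Y = X − (⟨X, δ⟩/‖δ‖²) • δ. Then ‖Y^{(κ)} − Y‖ ≤ 2κ‖X‖/‖δ‖. -/
theorem abs_inv_sq_sub_inv_add_sq_le {d κ : ℝ} (hd : 0 < d) (hκ : 0 ≤ κ) :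
    |(d ^ 2)⁻¹ - ((d + κ) ^ 2)⁻¹| ≤ 2 * κ / d ^ 3 := by
  have hle : ((d + κ) ^ 2)⁻¹ ≤ (d ^ 2)⁻¹ :=
    inv_anti₀ (by positivity) (pow_le_pow_left₀ hd.le (by linarith) 2)
  rw [abs_of_nonneg (sub_nonneg.mpr hle), inv_sub_inv (by positivity) (by positivity),
    div_le_div_iff₀ (by positivity) (by positivity)]
  -- `(d + κ)² - d² = κ (2d + κ)` and `d (2d + κ) ≤ 2 (d + κ)²`
  nlinarith [mul_nonneg (mul_nonneg hκ hκ) (pow_pos hd 3).le,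
    mul_nonneg (mul_nonneg hκ hκ) (mul_nonneg hκ (pow_pos hd 2).le)]

/-- The κ-regularized projection `Y^{(κ)} = X − (⟨X,δ⟩/(‖δ‖+κ)²) δ` is within
`2κ‖X‖/‖δ‖` of the exact orthogonal projection `Y = X − (⟨X,δ⟩/‖δ‖²) δ`. -/
theorem shrunk_projection_close_to_projection
    {H : Type*} [NormedAddCommGroup H] [InnerProductSpace ℝ H]
    (X δ : H) (hδ : δ ≠ 0) (κ : ℝ) (hκ : 0 ≤ κ) :
    ‖(X - ((inner ℝ X δ : ℝ) / (‖δ‖ + κ) ^ 2) • δ)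
        - (X - ((inner ℝ X δ : ℝ) / ‖δ‖ ^ 2) • δ)‖ ≤ 2 * κ * ‖X‖ / ‖δ‖ := by
  have hδ₀ : 0 < ‖δ‖ := norm_pos_iff.mpr hδ
  calc _ = ‖(inner ℝ X δ * ((‖δ‖ ^ 2)⁻¹ - ((‖δ‖ + κ) ^ 2)⁻¹)) • δ‖ := by
        rw [sub_sub_sub_cancel_left, mul_sub, sub_smul, div_eq_mul_inv, div_eq_mul_inv]
    _ = |inner ℝ X δ| * |(‖δ‖ ^ 2)⁻¹ - ((‖δ‖ + κ) ^ 2)⁻¹| * ‖δ‖ := by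
        rw [norm_smul, Real.norm_eq_abs, abs_mul]
    _ ≤ (‖X‖ * ‖δ‖) * (2 * κ / ‖δ‖ ^ 3) * ‖δ‖ := by
        gcongr
        exacts [abs_real_inner_le_norm X δ, abs_inv_sq_sub_inv_add_sq_le hδ₀ hκ]
    _ = 2 * κ * ‖X‖ / ‖δ‖ := by
        field_simp
end

section
/- Let c₁ > 0, α_w > 0, α_c > 1 and C₀ > 0. Let W : ℝ → ℝ satisfy 0 ≤ W(u) ≤ 1 and 1 − W(u) ≤ c₁|u|^{α_w} for all u ∈ ℝ, and let (a_h)_{h ≥ 1} be real numbers with |a_h| ≤ C₀ h^{−α_c} for all h ≥ 1. Then there exists a constant C > 0, depending only on c₁, α_w, α_c, C₀, such that for every integer ℓ ≥ 2, the kernel-smoothing bias E_ℓ = |Σ_{h=1}^∞ a_h − Σ_{h=1}^ℓ W(h/ℓ) a_h| satisfies: E_ℓ ≤ C ℓ^{1−α_c} if α_w − α_c > −1; E_ℓ ≤ C ℓ^{1−α_c} log ℓ if α_w − α_c = −1; and E_ℓ ≤ C ℓ^{−α_w} if α_w − α_c < −1. -/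
/-! Write the bias as `Σ_{h ≤ ℓ} (1 - W(h/ℓ)) a_h + Σ_{h > ℓ} a_h`. Comparing with
`∫_ℓ^∞ x^{-α_c} dx`, the tail is at most `C₀ ℓ^{1-α_c} / (α_c - 1)`. Since
`1 - W(h/ℓ) ≤ c₁ (h/ℓ)^{α_w}`, the head is at most `c₁ C₀ ℓ^{-α_w} Σ_{h ≤ ℓ} h^{α_w - α_c}`, and
this power sum is `O(ℓ^{α_w - α_c + 1})`, `O(log ℓ)` or `O(1)` according as `α_w - α_c` is `> -1`,
`= -1` or `< -1`. -/

open Finset Real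

theorem tsum_nat_add_rpow_neg_le {p : ℝ} (hp : 1 < p) {N : ℕ} (hN : 0 < N) :
    ∑' n : ℕ, ((n + N + 1 : ℕ) : ℝ) ^ (-p) ≤ (N : ℝ) ^ (1 - p) / (p - 1) := by
  have hN' : (0 : ℝ) < N := by exact_mod_cast hN
  calc _ ≤ ∫ x in Set.Ioi (N : ℝ), x ^ (-p) :=
        ((antitoneOn_rpow_Ioi_of_exponent_nonpos (by linarith)).mono (Set.Ici_subset_Ioi.2 hN'))
          |>.tsum_comp_add_le_integral N (integrableOn_Ioi_rpow_of_lt (by linarith) hN')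
            fun t ht => rpow_nonneg (hN'.trans ht).le _
    _ = _ := by
      rw [integral_Ioi_rpow_of_lt (by linarith) hN', show -p + 1 = 1 - p by ring, neg_div,
        ← div_neg, neg_sub]

theorem sum_Icc_rpow_le_of_nonneg {β : ℝ} (hβ : 0 ≤ β) (ℓ : ℕ) :
    ∑ h ∈ Icc 1 ℓ, (h : ℝ) ^ β ≤ (ℓ : ℝ) ^ (β + 1) :=
  calc ∑ h ∈ Icc 1 ℓ, (h : ℝ) ^ β ≤ ∑ _h ∈ Icc 1 ℓ, (ℓ : ℝ) ^ β :=
        sum_le_sum fun h hh => rpow_le_rpow h.cast_nonneg (mod_cast (mem_Icc.1 hh).2) hβ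
    _ = (ℓ : ℝ) ^ (β + 1) := by
        rw [sum_const, Nat.card_Icc, nsmul_eq_mul, rpow_add_one' ℓ.cast_nonneg (by linarith)]
        simp [mul_comm]

theorem sum_Icc_rpow_le_of_nonpos {β : ℝ} (hβ : -1 < β) (hβ' : β ≤ 0) {ℓ : ℕ} (hℓ : 1 ≤ ℓ) :
    ∑ h ∈ Icc 1 ℓ, (h : ℝ) ^ β ≤ (β + 1)⁻¹ * (ℓ : ℝ) ^ (β + 1) := by
  have hint : ∑ i ∈ Ico 1 ℓ, ((i + 1 : ℕ) : ℝ) ^ β ≤ ∫ x in (1 : ℕ)..(ℓ : ℝ), x ^ β :=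
    AntitoneOn.sum_le_integral_Ico hℓ ((antitoneOn_rpow_Ioi_of_exponent_nonpos hβ').mono
      fun x hx => zero_lt_one.trans_le (by exact_mod_cast hx.1))
  rw [integral_rpow (Or.inl hβ), Nat.cast_one, one_rpow] at hint
  have hinv : 1 ≤ (β + 1)⁻¹ := one_le_inv₀ (by linarith) |>.2 (by linarith)
  calc ∑ h ∈ Icc 1 ℓ, (h : ℝ) ^ β = 1 + ∑ i ∈ Ico 1 ℓ, ((i + 1 : ℕ) : ℝ) ^ β := by
        rw [← sum_erase_add _ _ (left_mem_Icc.2 hℓ), Icc_erase_left, ← Ico_add_one_add_one_eq_Ioc,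
          ← sum_Ico_add', Nat.cast_one, one_rpow, add_comm]
    _ ≤ 1 + ((ℓ : ℝ) ^ (β + 1) - 1) / (β + 1) := by linarith
    _ = (β + 1)⁻¹ * (ℓ : ℝ) ^ (β + 1) - ((β + 1)⁻¹ - 1) := by ring
    _ ≤ (β + 1)⁻¹ * (ℓ : ℝ) ^ (β + 1) := by linarith

theorem sum_Icc_rpow_le_of_neg_one_lt {β : ℝ} (hβ : -1 < β) {ℓ : ℕ} (hℓ : 1 ≤ ℓ) :
    ∑ h ∈ Icc 1 ℓ, (h : ℝ) ^ β ≤ max 1 (β + 1)⁻¹ * (ℓ : ℝ) ^ (β + 1) := by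
  rcases le_total 0 β with hβ' | hβ'
  · exact (sum_Icc_rpow_le_of_nonneg hβ' ℓ).trans
      (le_mul_of_one_le_left (by positivity) (le_max_left _ _))
  · exact (sum_Icc_rpow_le_of_nonpos hβ hβ' hℓ).trans
      (mul_le_mul_of_nonneg_right (le_max_right _ _) (by positivity))

theorem sum_Icc_rpow_le_tsum {β : ℝ} (hβ : β < -1) (ℓ : ℕ) :
    ∑ h ∈ Icc 1 ℓ, (h : ℝ) ^ β ≤ ∑' n : ℕ, (n : ℝ) ^ β :=
  (summable_nat_rpow.2 hβ).sum_le_tsum _ (fun n _ => rpow_nonneg n.cast_nonneg _)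

theorem sum_Icc_rpow_neg_one_le (ℓ : ℕ) :
    ∑ h ∈ Icc 1 ℓ, (h : ℝ) ^ (-1 : ℝ) ≤ 1 + log ℓ := by
  simpa [harmonic_eq_sum_Icc, rpow_neg_one] using harmonic_le_one_add_log ℓ

noncomputable def kernelBias (W : ℝ → ℝ) (a : ℕ → ℝ) (ℓ : ℕ) : ℝ :=
  (∑' h : ℕ, a (h + 1)) - ∑ h ∈ Icc 1 ℓ, W ((h : ℝ) / ℓ) * a h

theorem sum_Icc_eq_sum_range_add_one {M : Type*} [AddCommMonoid M] (f : ℕ → M) (n : ℕ) :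
    ∑ h ∈ Icc 1 n, f h = ∑ i ∈ range n, f (i + 1) := by
  rw [range_eq_Ico, sum_Ico_add' f 0 n 1, Ico_add_one_right_eq_Icc, zero_add]

theorem kernelBias_eq {a : ℕ → ℝ} (ha : Summable fun h => a (h + 1)) (W : ℝ → ℝ) (ℓ : ℕ) :
    kernelBias W a ℓ
      = ∑ h ∈ Icc 1 ℓ, (1 - W ((h : ℝ) / ℓ)) * a h + ∑' i : ℕ, a (i + ℓ + 1) := by
  rw [kernelBias, ← ha.sum_add_tsum_nat_add ℓ, ← sum_Icc_eq_sum_range_add_one]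
  simp only [sub_mul, one_mul, sum_sub_distrib]
  ring

theorem summable_of_abs_le_rpow_neg {C₀ p : ℝ} (hp : 1 < p) {a : ℕ → ℝ}
    (ha : ∀ h : ℕ, 1 ≤ h → |a h| ≤ C₀ * (h : ℝ) ^ (-p)) : Summable fun h => a (h + 1) :=
  .of_norm_bounded (((summable_nat_add_iff 1).2 (summable_nat_rpow.2 (by linarith))).mul_left C₀)
    fun h => ha (h + 1) (by omega)

theorem abs_sum_one_sub_mul_le {c₁ αw αc C₀ : ℝ} {W : ℝ → ℝ} (hW1 : ∀ u, W u ≤ 1)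
    (hWlip : ∀ u : ℝ, 1 - W u ≤ c₁ * |u| ^ αw)
    {a : ℕ → ℝ} (ha : ∀ h : ℕ, 1 ≤ h → |a h| ≤ C₀ * (h : ℝ) ^ (-αc)) (ℓ : ℕ) :
    |∑ h ∈ Icc 1 ℓ, (1 - W ((h : ℝ) / ℓ)) * a h|
      ≤ c₁ * C₀ * ((ℓ : ℝ) ^ (-αw) * ∑ h ∈ Icc 1 ℓ, (h : ℝ) ^ (αw - αc)) := by
  rw [mul_sum, mul_sum]
  refine (abs_sum_le_sum_abs _ _).trans (sum_le_sum fun h hh => ?_)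
  have h1 : 1 ≤ h := (mem_Icc.1 hh).1
  have hpos : (0 : ℝ) < h := by exact_mod_cast h1
  have hW := hWlip (h / ℓ)
  rw [abs_of_nonneg (by positivity)] at hW
  rw [abs_mul, abs_of_nonneg (sub_nonneg.2 (hW1 _))]
  calc (1 - W (h / ℓ)) * |a h| ≤ c₁ * (h / ℓ) ^ αw * (C₀ * (h : ℝ) ^ (-αc)) :=
        mul_le_mul hW (ha h h1) (abs_nonneg _) ((sub_nonneg.2 (hW1 _)).trans hW)
    _ = _ := by
        rw [div_rpow hpos.le ℓ.cast_nonneg, rpow_neg ℓ.cast_nonneg, rpow_neg hpos.le,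
          rpow_sub hpos]
        ring

theorem abs_tsum_tail_le {C₀ αc : ℝ} (hC₀ : 0 ≤ C₀) (hαc : 1 < αc) {a : ℕ → ℝ}
    (ha : ∀ h : ℕ, 1 ≤ h → |a h| ≤ C₀ * (h : ℝ) ^ (-αc)) {ℓ : ℕ} (hℓ : 0 < ℓ) :
    |∑' i : ℕ, a (i + ℓ + 1)| ≤ C₀ / (αc - 1) * (ℓ : ℝ) ^ (1 - αc) := by
  have hg : Summable fun i : ℕ => ((i + ℓ + 1 : ℕ) : ℝ) ^ (-αc) :=
    (summable_nat_add_iff (ℓ + 1)).2 (summable_nat_rpow.2 (by linarith))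
  calc |∑' i : ℕ, a (i + ℓ + 1)| ≤ ∑' i : ℕ, C₀ * ((i + ℓ + 1 : ℕ) : ℝ) ^ (-αc) :=
        tsum_of_norm_bounded (f := fun i => a (i + ℓ + 1)) (hg.mul_left C₀).hasSum
          fun i => ha _ (by omega)
    _ = C₀ * ∑' i : ℕ, ((i + ℓ + 1 : ℕ) : ℝ) ^ (-αc) := tsum_mul_left
    _ ≤ C₀ * ((ℓ : ℝ) ^ (1 - αc) / (αc - 1)) :=
        mul_le_mul_of_nonneg_left (tsum_nat_add_rpow_neg_le hαc hℓ) hC₀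
    _ = _ := by ring

theorem abs_kernelBias_le {c₁ αw αc C₀ : ℝ} (hC₀ : 0 ≤ C₀) (hαc : 1 < αc) {W : ℝ → ℝ}
    (hW1 : ∀ u, W u ≤ 1) (hWlip : ∀ u : ℝ, 1 - W u ≤ c₁ * |u| ^ αw)
    {a : ℕ → ℝ} (ha : ∀ h : ℕ, 1 ≤ h → |a h| ≤ C₀ * (h : ℝ) ^ (-αc)) {ℓ : ℕ} (hℓ : 0 < ℓ) :
    |kernelBias W a ℓ| ≤ c₁ * C₀ * ((ℓ : ℝ) ^ (-αw) * ∑ h ∈ Icc 1 ℓ, (h : ℝ) ^ (αw - αc))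
      + C₀ / (αc - 1) * (ℓ : ℝ) ^ (1 - αc) := by
  rw [kernelBias_eq (summable_of_abs_le_rpow_neg hαc ha)]
  exact (abs_add_le _ _).trans
    (add_le_add (abs_sum_one_sub_mul_le hW1 hWlip ha ℓ) (abs_tsum_tail_le hC₀ hαc ha hℓ))

theorem exists_abs_kernelBias_le_of_rates {c₁ αw αc C₀ : ℝ} (hc₁ : 0 < c₁) (hC₀ : 0 < C₀)
    (hαc : 1 < αc) {W : ℝ → ℝ} (hW1 : ∀ u, W u ≤ 1) (hWlip : ∀ u : ℝ, 1 - W u ≤ c₁ * |u| ^ αw)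
    {a : ℕ → ℝ} (ha : ∀ h : ℕ, 1 ≤ h → |a h| ≤ C₀ * (h : ℝ) ^ (-αc))
    {r : ℕ → ℝ} {K K' : ℝ} (hK : 0 ≤ K) (hK' : 0 < K')
    (hsum : ∀ ℓ : ℕ, 2 ≤ ℓ → (ℓ : ℝ) ^ (-αw) * ∑ h ∈ Icc 1 ℓ, (h : ℝ) ^ (αw - αc) ≤ K * r ℓ)
    (htail : ∀ ℓ : ℕ, 2 ≤ ℓ → (ℓ : ℝ) ^ (1 - αc) ≤ K' * r ℓ) :
    ∃ C : ℝ, 0 < C ∧ ∀ ℓ : ℕ, 2 ≤ ℓ → |kernelBias W a ℓ| ≤ C * r ℓ := by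
  have hαc' : 0 < αc - 1 := sub_pos.2 hαc
  refine ⟨c₁ * C₀ * K + C₀ / (αc - 1) * K', by positivity, fun ℓ hℓ => ?_⟩
  calc |kernelBias W a ℓ|
      ≤ c₁ * C₀ * ((ℓ : ℝ) ^ (-αw) * ∑ h ∈ Icc 1 ℓ, (h : ℝ) ^ (αw - αc))
        + C₀ / (αc - 1) * (ℓ : ℝ) ^ (1 - αc) := abs_kernelBias_le hC₀.le hαc hW1 hWlip ha (by omega)
    _ ≤ c₁ * C₀ * (K * r ℓ) + C₀ / (αc - 1) * (K' * r ℓ) :=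
        add_le_add (mul_le_mul_of_nonneg_left (hsum ℓ hℓ) (by positivity))
          (mul_le_mul_of_nonneg_left (htail ℓ hℓ) (by positivity))
    _ = (c₁ * C₀ * K + C₀ / (αc - 1) * K') * r ℓ := by ring

theorem rpow_neg_mul_sum_Icc_rpow_sub_le {p q : ℝ} (hpq : -1 < p - q) {ℓ : ℕ} (hℓ : 1 ≤ ℓ) :
    (ℓ : ℝ) ^ (-p) * ∑ h ∈ Icc 1 ℓ, (h : ℝ) ^ (p - q)
      ≤ max 1 (p - q + 1)⁻¹ * (ℓ : ℝ) ^ (1 - q) := by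
  have hℓ' : (0 : ℝ) < ℓ := by exact_mod_cast hℓ
  calc (ℓ : ℝ) ^ (-p) * ∑ h ∈ Icc 1 ℓ, (h : ℝ) ^ (p - q)
      ≤ (ℓ : ℝ) ^ (-p) * (max 1 (p - q + 1)⁻¹ * (ℓ : ℝ) ^ (p - q + 1)) :=
        mul_le_mul_of_nonneg_left (sum_Icc_rpow_le_of_neg_one_lt hpq hℓ) (by positivity)
    _ = max 1 (p - q + 1)⁻¹ * (ℓ : ℝ) ^ (-p + (p - q + 1)) := by rw [rpow_add hℓ' (-p)]; ring
    _ = _ := by ring_nf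

theorem one_le_inv_log_two_mul_log {x : ℝ} (hx : 2 ≤ x) : 1 ≤ (log 2)⁻¹ * log x := by
  rw [inv_mul_eq_div, one_le_div (log_pos one_lt_two)]
  exact log_le_log two_pos hx

theorem rpow_neg_mul_sum_Icc_rpow_neg_one_le {p q : ℝ} (hpq : p - q = -1) {ℓ : ℕ} (hℓ : 2 ≤ ℓ) :
    (ℓ : ℝ) ^ (-p) * ∑ h ∈ Icc 1 ℓ, (h : ℝ) ^ (p - q)
      ≤ (1 + (log 2)⁻¹) * ((ℓ : ℝ) ^ (1 - q) * log ℓ) := by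
  have hlog := one_le_inv_log_two_mul_log (x := ℓ) (by exact_mod_cast hℓ)
  rw [hpq, show -p = 1 - q by linarith]
  calc (ℓ : ℝ) ^ (1 - q) * ∑ h ∈ Icc 1 ℓ, (h : ℝ) ^ (-1 : ℝ)
      ≤ (ℓ : ℝ) ^ (1 - q) * (1 + log ℓ) :=
        mul_le_mul_of_nonneg_left (sum_Icc_rpow_neg_one_le ℓ) (by positivity)
    _ ≤ (ℓ : ℝ) ^ (1 - q) * ((1 + (log 2)⁻¹) * log ℓ) :=
        mul_le_mul_of_nonneg_left (by linarith) (by positivity)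
    _ = _ := by ring

theorem kernel_smoothing_bias_trichotomy_general
    (c₁ αw αc C₀ : ℝ) (hc₁ : 0 < c₁) (hαc : 1 < αc) (hC₀ : 0 < C₀)
    (W : ℝ → ℝ) (hW1 : ∀ u, W u ≤ 1)
    (hWlip : ∀ u : ℝ, 1 - W u ≤ c₁ * |u| ^ αw)
    (a : ℕ → ℝ) (ha : ∀ h : ℕ, 1 ≤ h → |a h| ≤ C₀ * (h : ℝ) ^ (-αc)) :
    ∃ C : ℝ, 0 < C ∧ ∀ ℓ : ℕ, 2 ≤ ℓ →
      (αw - αc > -1 →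
        |(∑' h : ℕ, a (h + 1)) - ∑ h ∈ Finset.Icc 1 ℓ, W ((h : ℝ) / ℓ) * a h|
          ≤ C * (ℓ : ℝ) ^ (1 - αc))
      ∧ (αw - αc = -1 →
        |(∑' h : ℕ, a (h + 1)) - ∑ h ∈ Finset.Icc 1 ℓ, W ((h : ℝ) / ℓ) * a h|
          ≤ C * (ℓ : ℝ) ^ (1 - αc) * Real.log ℓ)
      ∧ (αw - αc < -1 →
        |(∑' h : ℕ, a (h + 1)) - ∑ h ∈ Finset.Icc 1 ℓ, W ((h : ℝ) / ℓ) * a h|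
          ≤ C * (ℓ : ℝ) ^ (-αw)) := by
  rcases lt_trichotomy (αw - αc) (-1) with hβ | hβ | hβ
  · obtain ⟨C, hC, hE⟩ := exists_abs_kernelBias_le_of_rates hc₁ hC₀ hαc hW1 hWlip ha
      (r := fun ℓ => (ℓ : ℝ) ^ (-αw)) (tsum_nonneg fun n => rpow_nonneg n.cast_nonneg _) one_pos
      (fun ℓ _ => (mul_le_mul_of_nonneg_left (sum_Icc_rpow_le_tsum hβ ℓ) (by positivity)).trans_eq
        (mul_comm _ _))
      (fun ℓ hℓ => (rpow_le_rpow_of_exponent_le (Nat.one_le_cast.2 (by omega)) (by linarith))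
        |>.trans_eq (one_mul _).symm)
    exact ⟨C, hC, fun ℓ hℓ => ⟨by intro; linarith, by intro; linarith, fun _ => hE ℓ hℓ⟩⟩
  · obtain ⟨C, hC, hE⟩ := exists_abs_kernelBias_le_of_rates hc₁ hC₀ hαc hW1 hWlip ha
      (r := fun ℓ => (ℓ : ℝ) ^ (1 - αc) * log ℓ) (by positivity) (inv_pos.2 (log_pos one_lt_two))
      (fun ℓ hℓ => rpow_neg_mul_sum_Icc_rpow_neg_one_le hβ hℓ)
      (fun ℓ hℓ => (le_mul_of_one_le_right (by positivity)
        (one_le_inv_log_two_mul_log (x := ℓ) (by exact_mod_cast hℓ))).trans_eq (by ring))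
    exact ⟨C, hC, fun ℓ hℓ =>
      ⟨by intro; linarith, fun _ => (hE ℓ hℓ).trans_eq (mul_assoc _ _ _).symm, by intro; linarith⟩⟩
  · obtain ⟨C, hC, hE⟩ := exists_abs_kernelBias_le_of_rates hc₁ hC₀ hαc hW1 hWlip ha
      (r := fun ℓ => (ℓ : ℝ) ^ (1 - αc)) (by positivity) one_pos
      (fun ℓ hℓ => rpow_neg_mul_sum_Icc_rpow_sub_le hβ (by omega)) (fun ℓ _ => (one_mul _).ge)
    exact ⟨C, hC, fun ℓ hℓ => ⟨fun _ => hE ℓ hℓ, by intro; linarith, by intro; linarith⟩⟩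

/-- Trichotomy for the bias of the kernel long-run covariance estimator: with kernel
weights `W` satisfying `1 − W(u) ≤ c₁|u|^{α_w}` and coefficients `|a_h| ≤ C₀ h^{−α_c}`
(`α_c > 1`), the bias `E_ℓ = |Σ_{h≥1} a_h − Σ_{h=1}^ℓ W(h/ℓ) a_h|` is bounded by
`C ℓ^{1−α_c}`, `C ℓ^{1−α_c} log ℓ`, or `C ℓ^{−α_w}` according to the sign of
`α_w − α_c + 1`. -/
theorem kernel_smoothing_bias_trichotomy
    (c₁ αw αc C₀ : ℝ) (hc₁ : 0 < c₁) (hαw : 0 < αw) (hαc : 1 < αc) (hC₀ : 0 < C₀)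
    (W : ℝ → ℝ) (hW0 : ∀ u, 0 ≤ W u) (hW1 : ∀ u, W u ≤ 1)
    (hWlip : ∀ u : ℝ, 1 - W u ≤ c₁ * |u| ^ αw)
    (a : ℕ → ℝ) (ha : ∀ h : ℕ, 1 ≤ h → |a h| ≤ C₀ * (h : ℝ) ^ (-αc)) :
    ∃ C : ℝ, 0 < C ∧ ∀ ℓ : ℕ, 2 ≤ ℓ →
      (αw - αc > -1 →
        |(∑' h : ℕ, a (h + 1)) - ∑ h ∈ Finset.Icc 1 ℓ, W ((h : ℝ) / ℓ) * a h|
          ≤ C * (ℓ : ℝ) ^ (1 - αc))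
      ∧ (αw - αc = -1 →
        |(∑' h : ℕ, a (h + 1)) - ∑ h ∈ Finset.Icc 1 ℓ, W ((h : ℝ) / ℓ) * a h|
          ≤ C * (ℓ : ℝ) ^ (1 - αc) * Real.log ℓ)
      ∧ (αw - αc < -1 →
        |(∑' h : ℕ, a (h + 1)) - ∑ h ∈ Finset.Icc 1 ℓ, W ((h : ℝ) / ℓ) * a h|
          ≤ C * (ℓ : ℝ) ^ (-αw)) :=
  kernel_smoothing_bias_trichotomy_general c₁ αw αc C₀ hc₁ hαc hC₀ W hW1 hWlip a ha
end
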